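/- Let p > 3 be a prime. Let A be an 𝔽_p-brace whose additive group is a 4-dimensional 𝔽_p-vector space with basis P, Q, R, S, and suppose P, Q, R, S satisfy the Multiplicative Table with parameters y, i, k ∈ 𝔽_p, y ≠ 0. Then every element of A can be written in a unique way as R^α ∘ Q^β ∘ P^γ ∘ S^ξ with 0 ≤ α, β, γ, ξ < p, where g^n denotes the n-fold product g∘⋯∘g in the group (A,∘). -/

import Mathlib

/-- A left brace: `(A, +)` an abelian group, `(A, *)` a group (we write the brace
multiplication `∘` as `*`), with `a * (b + c) + a = a * b + a * c`. -/
class LeftBrace (A : Type*) extends Group A, AddCommGroup A where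
  mul_add_eq : ∀ a b c : A, a * (b + c) + a = a * b + a * c

namespace LeftBrace

/-- The star operation `a * b = a∘b - a - b` of a left brace. -/
def star {A : Type*} [LeftBrace A] (a b : A) : A := a * b - a - b

end LeftBrace

/-- An `𝔽ₚ`-brace: a left brace whose additive group is a `ZMod p`-vector space
with `a * (α • b) = α • (a * b)`. -/
class FpBrace (p : ℕ) (A : Type*) extends LeftBrace A, Module (ZMod p) A where
  star_smul' : ∀ (α : ZMod p) (a b : A),
    LeftBrace.star a (α • b) = α • LeftBrace.star a b

/-- The left chain `A^1 = A`, `A^{i+1} = A * A^i` (additive subgroup generated by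
`a * b`, `a ∈ A`, `b ∈ A^i`). -/
def lpow (A : Type*) [LeftBrace A] : ℕ → AddSubgroup A
  | 0 => ⊤
  | 1 => ⊤
  | (n+2) => AddSubgroup.closure
      {x : A | ∃ a : A, ∃ b ∈ lpow A (n+1), x = LeftBrace.star a b}

/-- The right chain `A^{(1)} = A`, `A^{(i+1)} = A^{(i)} * A`. -/
def rpow (A : Type*) [LeftBrace A] : ℕ → AddSubgroup A
  | 0 => ⊤
  | 1 => ⊤
  | (n+2) => AddSubgroup.closure
      {x : A | ∃ a ∈ rpow A (n+1), ∃ b : A, x = LeftBrace.star a b}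

/-- A left brace is right nilpotent if `A^{(n)} = 0` for some `n`. -/
def IsRightNilpotent (A : Type*) [LeftBrace A] : Prop := ∃ n, rpow A n = ⊥

/-- The defining relations of the group XV on generators `P, Q, R, S`. -/
def XVRelations {A : Type*} [LeftBrace A] (p : ℕ) (P Q R S : A) : Prop :=
  Q * S = S * Q * P ∧ Q * R = R * Q ∧ P * S = S * P ∧ P * Q = Q * P ∧
  P * R = R * P ∧ R * S = S * R * Q ∧
  P ^ p = 1 ∧ Q ^ p = 1 ∧ R ^ p = 1 ∧ S ^ p = 1

/-- The multiplicative group of the brace `A` is the group XV, with generators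
`P, Q, R, S` satisfying the XV relations. -/
def IsXVBrace (p : ℕ) (A : Type*) [LeftBrace A] (P Q R S : A) : Prop :=
  Nat.card A = p ^ 4 ∧ Subgroup.closure {P, Q, R, S} = ⊤ ∧ XVRelations p P Q R S


/-- The Multiplicative Table with parameters `y, i, k`. -/
def MultTable {p : ℕ} {A : Type*} [LeftBrace A] [Module (ZMod p) A]
    (P Q R S : A) (y i k : ZMod p) : Prop :=
  LeftBrace.star P P = 0 ∧ LeftBrace.star P Q = 0 ∧
  LeftBrace.star P R = y • S ∧ LeftBrace.star P S = 0 ∧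
  LeftBrace.star Q P = 0 ∧ LeftBrace.star Q Q = -(y • S) ∧
  LeftBrace.star Q R = ((2 : ZMod p)⁻¹ * y) • S ∧ LeftBrace.star Q S = 0 ∧
  LeftBrace.star R P = y • S ∧ LeftBrace.star R Q = ((2 : ZMod p)⁻¹ * y) • S ∧
  LeftBrace.star R R = i • P + k • S ∧ LeftBrace.star R S = 0 ∧
  LeftBrace.star S P = 0 ∧ LeftBrace.star S Q = -P ∧
  LeftBrace.star S R = -Q + P - ((2 : ZMod p)⁻¹ * y) • S ∧ LeftBrace.star S S = 0

/-- Additive subgroup generated by all `x * y`, `x ∈ X`, `y ∈ Y`. -/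
def starSpan {A : Type*} [LeftBrace A] (X Y : AddSubgroup A) : AddSubgroup A :=
  AddSubgroup.closure {z : A | ∃ x ∈ X, ∃ y ∈ Y, z = LeftBrace.star x y}

/-- An ideal of a left brace: an additive subgroup closed under all `λ_a` and
normal in `(A, ∘)`. -/
def IsBraceIdeal {A : Type*} [LeftBrace A] (I : AddSubgroup A) : Prop :=
  (∀ a : A, ∀ b ∈ I, a * b - a ∈ I) ∧ (∀ a : A, ∀ b ∈ I, a * b * a⁻¹ ∈ I)

/-- A brace is prime if the product of any two nonzero ideals is nonzero. -/
def IsPrimeBrace (A : Type*) [LeftBrace A] : Prop :=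
  ∀ I J : AddSubgroup A, IsBraceIdeal I → IsBraceIdeal J → I ≠ ⊥ → J ≠ ⊥ →
    starSpan I J ≠ ⊥

/-- Left chain of a nonassociative algebra given by a bilinear map. -/
def preLieL (R : Type*) [CommRing R] (V : Type*) [AddCommGroup V] [Module R V]
    (mul : V →ₗ[R] V →ₗ[R] V) : ℕ → Submodule R V
  | 0 => ⊤
  | 1 => ⊤
  | (n+2) => Submodule.span R
      {x : V | ∃ a : V, ∃ b ∈ preLieL R V mul (n+1), x = mul a b}

/-- Right chain of a nonassociative algebra given by a bilinear map. -/
def preLieR (R : Type*) [CommRing R] (V : Type*) [AddCommGroup V] [Module R V]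
    (mul : V →ₗ[R] V →ₗ[R] V) : ℕ → Submodule R V
  | 0 => ⊤
  | 1 => ⊤
  | (n+2) => Submodule.span R
      {x : V | ∃ a ∈ preLieR R V mul (n+1), ∃ b : V, x = mul a b}

/-- The defining relations of the group XIV on generators `P, Q, R, S`. -/
def XIVRelations {A : Type*} [LeftBrace A] (p : ℕ) (P Q R S : A) : Prop :=
  Q * P = P * Q ∧ Q * R = R * Q ∧ Q * S = S * Q ∧
  P * R = R * P ∧ P * S = S * P ∧ R * S = S * R * P ∧
  P ^ p = 1 ∧ Q ^ p = 1 ∧ R ^ p = 1 ∧ S ^ p = 1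

/-!
Writing `a ∘ b = a + b + a ⋆ b`, each `λ_a = a ∘ - - a` is additive, so the table yields closed
forms for the powers of the generators (for each generator `g`, the iterates `g ⋆ (g ⋆ ⋯)` vanish
after at most three steps, giving binomial coefficients) and for `x ⋆ g` with `x` a power of a
generator. Expanding `R^a ∘ (Q^b ∘ (P^c ∘ S^d))` from the inside out, its coordinates in the basis
`P, Q, R, S` are `(c + C(a,2) i, b, a, d + f(a, b, c))`. This map is triangular, hence injective
on `{0, …, p - 1}⁴`, and so bijective by counting.
-/

local infixl:70 " ⋆ " => LeftBrace.star

namespace LeftBrace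

variable {A : Type*} [LeftBrace A]

theorem mul_eq_add_add_star (a b : A) : a * b = a + b + a ⋆ b := by
  unfold star; abel

theorem mul_add_eq_sub (a b c : A) : a * (b + c) = a * b + a * c - a :=
  eq_sub_of_add_eq (mul_add_eq a b c)

theorem one_eq_zero : (1 : A) = 0 := by
  simpa using mul_add_eq (1 : A) 0 0

theorem star_add (a b c : A) : a ⋆ (b + c) = a ⋆ b + a ⋆ c := by
  unfold star; rw [mul_add_eq_sub]; abel

theorem star_zero (a : A) : a ⋆ (0 : A) = 0 := by
  simpa using star_add a 0 0

theorem star_neg (a b : A) : a ⋆ (-b) = -(a ⋆ b) := by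
  refine eq_neg_of_add_eq_zero_left ?_
  rw [← star_add, neg_add_cancel, star_zero]

theorem star_sub (a b c : A) : a ⋆ (b - c) = a ⋆ b - a ⋆ c := by
  rw [sub_eq_add_neg, star_add, star_neg, sub_eq_add_neg]

theorem one_star (b : A) : (1 : A) ⋆ b = 0 := by
  unfold star; rw [one_mul, one_eq_zero]; abel

theorem mul_star (a b c : A) : (a * b) ⋆ c = a ⋆ c + a ⋆ (b ⋆ c) + b ⋆ c := by
  have hbc : b * c = b + (c + b ⋆ c) := by unfold star; abel
  have habc : (a * b) ⋆ c = a * (b * c) - a * b - c := by unfold star; rw [mul_assoc]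
  rw [habc, hbc, mul_add_eq_sub, mul_add_eq_sub]
  unfold star
  abel

end LeftBrace

namespace FpBrace

open LeftBrace

variable {p : ℕ} {A : Type*} [FpBrace p A]

theorem star_smul (α : ZMod p) (a b : A) : a ⋆ (α • b) = α • (a ⋆ b) :=
  star_smul' α a b

theorem pow_eq_of_star_star_star {a b c : A} (hb : a ⋆ a = b) (hc : a ⋆ b = c) (h0 : a ⋆ c = 0)
    (n : ℕ) :
    a ^ n = (n : ZMod p) • a + (n.choose 2 : ZMod p) • b + (n.choose 3 : ZMod p) • c := by
  induction n with
  | zero => simp [one_eq_zero]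
  | succ n ih =>
    rw [pow_succ', mul_eq_add_add_star, ih, LeftBrace.star_add, LeftBrace.star_add, star_smul,
      star_smul, star_smul, hb, hc, h0, Nat.choose_succ_succ n 1, Nat.choose_succ_succ n 2,
      Nat.choose_one_right]
    push_cast
    module

theorem star_pow_left {a b c : A} (hc : a ⋆ b = c) (h0 : a ⋆ c = 0) (n : ℕ) :
    (a ^ n) ⋆ b = (n : ZMod p) • c := by
  induction n with
  | zero => simp [one_star]
  | succ n ih =>
    rw [pow_succ', mul_star, hc, ih, star_smul, h0]
    push_cast
    module

theorem star_pow_left_eq_zero {a b : A} (h : a ⋆ b = 0) (n : ℕ) : (a ^ n) ⋆ b = 0 := by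
  simpa using star_pow_left (p := p) h (LeftBrace.star_zero a) n

end FpBrace

theorem ZMod.natCast_finVal_injective (n : ℕ) :
    Function.Injective fun u : Fin n => ((u : ℕ) : ZMod n) := by
  intro u w h
  ext
  simpa [ZMod.val_natCast_of_lt u.isLt, ZMod.val_natCast_of_lt w.isLt] using congrArg ZMod.val h

/-- The coordinates of `R ^ a * Q ^ b * P ^ c * S ^ d` in the basis `P, Q, R, S`. -/
def normalFormCoords {p : ℕ} (y i k : ZMod p) (a b c d : ℕ) : Fin 4 → ZMod p :=
  ![c + (a.choose 2 : ZMod p) * i, b, a,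
    d - (b.choose 2 : ZMod p) * y + (a.choose 2 : ZMod p) * k + (a.choose 3 : ZMod p) * (i * y)
      + a * b * (2⁻¹ * y) + a * c * y]

theorem normalFormCoords_bijective {p : ℕ} [NeZero p] (y i k : ZMod p) :
    Function.Bijective fun v : Fin 4 → Fin p =>
      normalFormCoords y i k (v 0) (v 1) (v 2) (v 3) := by
  refine Function.Injective.bijective_of_nat_card_le (fun v w hvw => ?_) (by simp)
  have cast_inj := ZMod.natCast_finVal_injective p
  have hR := congrFun hvw 2
  have hQ := congrFun hvw 1
  have hP := congrFun hvw 0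
  have hS := congrFun hvw 3
  simp only [normalFormCoords, Matrix.cons_val] at hR hQ hP hS
  have h0 : v 0 = w 0 := cast_inj hR
  have h1 : v 1 = w 1 := cast_inj hQ
  rw [h0] at hP hS
  have h2 : v 2 = w 2 := cast_inj (add_right_cancel hP)
  rw [h1, h2] at hS
  have h3 : v 3 = w 3 := cast_inj (by linear_combination hS)
  ext j
  fin_cases j <;> simp [h0, h1, h2, h3]

namespace MultTable

open LeftBrace FpBrace

variable {p : ℕ} {A : Type*} [FpBrace p A] {P Q R S : A} {y i k : ZMod p}

theorem pow_mul_pow_mul_pow_mul_pow (h : MultTable P Q R S y i k) (a b c d : ℕ) :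
    R ^ a * Q ^ b * P ^ c * S ^ d = ∑ j, normalFormCoords y i k a b c d j • ![P, Q, R, S] j := by
  obtain ⟨hPP, -, -, hPS, hQP, hQQ, -, hQS, hRP, hRQ, hRR, hRS, -, -, -, hSS⟩ := h
  have hRS' (α : ZMod p) : R ⋆ (α • S) = 0 := by rw [FpBrace.star_smul, hRS, smul_zero]
  have hP : P ^ c = (c : ZMod p) • P := by
    simpa using pow_eq_of_star_star_star hPP (LeftBrace.star_zero P) (LeftBrace.star_zero P) c
  have hS : S ^ d = (d : ZMod p) • S := by
    simpa using pow_eq_of_star_star_star hSS (LeftBrace.star_zero S) (LeftBrace.star_zero S) d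
  have hQ : Q ^ b = (b : ZMod p) • Q - (b.choose 2 : ZMod p) • y • S := by
    have hQyS : Q ⋆ -(y • S) = 0 := by
      rw [LeftBrace.star_neg, FpBrace.star_smul, hQS, smul_zero, neg_zero]
    rw [pow_eq_of_star_star_star hQQ hQyS (LeftBrace.star_zero Q) b]
    module
  have hR : R ^ a = (a : ZMod p) • R + (a.choose 2 : ZMod p) • (i • P + k • S)
      + (a.choose 3 : ZMod p) • (i * y) • S := by
    refine pow_eq_of_star_star_star hRR ?_ (hRS' _) a
    rw [LeftBrace.star_add, FpBrace.star_smul, FpBrace.star_smul, hRP, hRS]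
    module
  rw [mul_assoc, mul_assoc, mul_eq_add_add_star (P ^ c), hS, FpBrace.star_smul,
    star_pow_left_eq_zero hPS, smul_zero, add_zero, hP, mul_eq_add_add_star (Q ^ b)]
  simp only [LeftBrace.star_add, FpBrace.star_smul, star_pow_left_eq_zero hQP,
    star_pow_left_eq_zero hQS]
  rw [hQ, mul_eq_add_add_star (R ^ a)]
  simp only [LeftBrace.star_add, LeftBrace.star_sub, FpBrace.star_smul, LeftBrace.star_zero,
    star_pow_left hRP (hRS' y), star_pow_left hRQ (hRS' _), star_pow_left_eq_zero hRS]
  rw [hR, Fin.sum_univ_four]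
  simp only [normalFormCoords, Matrix.cons_val]
  module

end MultTable

theorem statement14_general (p : ℕ) (hp : p.Prime) (A : Type*) [FpBrace p A]
    (P Q R S : A) (B : Module.Basis (Fin 4) (ZMod p) A)
    (hB : B 0 = P ∧ B 1 = Q ∧ B 2 = R ∧ B 3 = S)
    (y i k : ZMod p) (htable : MultTable P Q R S y i k) :
    ∀ a : A, ∃! v : Fin 4 → Fin p,
      a = R ^ (v 0).val * Q ^ (v 1).val * P ^ (v 2).val * S ^ (v 3).val := by
  have : NeZero p := ⟨hp.ne_zero⟩
  have hPQRS : ![P, Q, R, S] = ⇑B := by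
    obtain ⟨h0, h1, h2, h3⟩ := hB
    ext j
    fin_cases j <;> simp [h0, h1, h2, h3]
  have hnormal : (B.equivFun.symm ∘ fun v : Fin 4 → Fin p =>
      normalFormCoords y i k (v 0) (v 1) (v 2) (v 3)) =
      fun v => R ^ (v 0).val * Q ^ (v 1).val * P ^ (v 2).val * S ^ (v 3).val := by
    ext v
    simp [htable.pow_mul_pow_mul_pow_mul_pow, hPQRS, Module.Basis.equivFun_symm_apply]
  have hbij := B.equivFun.symm.bijective.comp (normalFormCoords_bijective y i k)
  rw [hnormal] at hbij
  simpa only [eq_comm] using hbij.existsUnique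

/-- in an `𝔽ₚ`-brace with basis `P, Q, R, S` satisfying the Multiplicative
Table, every element is uniquely `R^α ∘ Q^β ∘ P^γ ∘ S^ξ` with `0 ≤ α, β, γ, ξ < p`. -/
theorem statement14 (p : ℕ) (hp : p.Prime) (hp3 : 3 < p) (A : Type*) [FpBrace p A]
    (P Q R S : A) (B : Module.Basis (Fin 4) (ZMod p) A)
    (hB : B 0 = P ∧ B 1 = Q ∧ B 2 = R ∧ B 3 = S)
    (y i k : ZMod p) (hy : y ≠ 0) (htable : MultTable P Q R S y i k) :
    ∀ a : A, ∃! v : Fin 4 → Fin p,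
      a = R ^ (v 0).val * Q ^ (v 1).val * P ^ (v 2).val * S ^ (v 3).val :=
  statement14_general p hp A P Q R S B hB y i k htable
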